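/- Let x be irrational and R ≥ 1. Suppose for an interval of denominators (Σ, Σ+L] with L ≥ 2 the points { qx mod 1 : q = Σ+1, …, Σ+L } cut the circle into arcs all of length at most R/L. Then for any δ ∈ (0,1], the number of q ∈ (Σ, Σ+L] with qx mod 1 ∈ [0, δ) is at least ⌊δL/R⌋. -/

import Mathlib

/-- The length of the gap (arc of the complement) starting at the point `s` of the finite
set `S` on the circle `ℝ/ℤ`: the least `ℓ > 0` with `s + ℓ ∈ S`. -/
noncomputable def circGap (S : Set (AddCircle (1 : ℝ))) (s : AddCircle (1 : ℝ)) : ℝ :=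
  sInf {ℓ : ℝ | 0 < ℓ ∧ s + (ℓ : AddCircle (1 : ℝ)) ∈ S}

/-- The points `{q x mod 1 : q = q₀+1, …, q₀+L}` on the circle. -/
def orbitSet (x : ℝ) (q₀ L : ℕ) : Set (AddCircle (1 : ℝ)) :=
  {s | ∃ q : ℕ, q₀ + 1 ≤ q ∧ q ≤ q₀ + L ∧ s = (((q : ℝ) * x : ℝ) : AddCircle (1 : ℝ))}

lemma clb_coe_fract (r : ℝ) : ((Int.fract r : ℝ) : AddCircle (1:ℝ)) = (r : AddCircle (1:ℝ)) := by
  conv_rhs => rw [← Int.fract_add_floor r]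
  rw [AddCircle.coe_add]
  simp [AddCircle.coe_eq_zero_iff]

lemma clb_coe_ne {x : ℝ} (hx : Irrational x) {q1 q2 : ℕ} (h : q1 ≠ q2) :
    (((q1:ℝ)*x : ℝ) : AddCircle (1:ℝ)) ≠ (((q2:ℝ)*x : ℝ) : AddCircle (1:ℝ)) := by
  intro he
  have hsub : ((((q1:ℝ)*x - (q2:ℝ)*x : ℝ)) : AddCircle (1:ℝ)) = 0 := by
    rw [AddCircle.coe_sub, he, sub_self]
  rw [AddCircle.coe_eq_zero_iff] at hsub
  obtain ⟨n, hn⟩ := hsub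
  have hn0 : (n:ℝ) = (q1:ℝ)*x - (q2:ℝ)*x := by simpa using hn
  have hn' : ((n:ℝ)) = (((q1:ℤ) - (q2:ℤ) : ℤ) : ℝ) * x := by push_cast; linarith
  have hd : ((q1:ℤ) - (q2:ℤ) : ℤ) ≠ 0 := by
    simpa [sub_eq_zero] using fun hh => h (by exact_mod_cast hh)
  exact Int.not_irrational n (hn' ▸ hx.intCast_mul hd)

/-- Key counting step: if all gaps are `≤ ℓ`, any interval `[a, a+ℓ) ⊆ [0,1)` contains a point. -/
lemma clb_interval_hit (x : ℝ) (hx : Irrational x) (Sig L : ℕ) (hL : 2 ≤ L) (ℓ : ℝ) (hℓ : 0 < ℓ)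
    (hgap : ∀ s ∈ orbitSet x Sig L, circGap (orbitSet x Sig L) s ≤ ℓ)
    (a : ℝ) (ha : 0 ≤ a) (hal : a + ℓ ≤ 1) :
    ∃ q : ℕ, Sig + 1 ≤ q ∧ q ≤ Sig + L ∧ Int.fract ((q:ℝ)*x) ∈ Set.Ico a (a+ℓ) := by
  by_contra hcon
  push_neg at hcon
  set F : Finset ℕ := Finset.Icc (Sig+1) (Sig+L) with hF
  have hFmem : ∀ q, q ∈ F ↔ (Sig + 1 ≤ q ∧ q ≤ Sig + L) := by
    intro q; simp [hF]
  have hFne : F.Nonempty := ⟨Sig+1, by rw [hFmem]; omega⟩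
  have hfr01 : ∀ q : ℕ, Int.fract ((q:ℝ)*x) ∈ Set.Ico (0:ℝ) 1 :=
    fun q => ⟨Int.fract_nonneg _, Int.fract_lt_one _⟩
  have key : ∀ q0 ∈ F, ∀ c : ℝ, ℓ < c → Int.fract ((q0:ℝ)*x) + c ≤ 2 →
      (∀ g : ℝ, 0 < g → g < c →
        ∀ q ∈ F, Int.fract ((q0:ℝ)*x) + g ≠ Int.fract ((q:ℝ)*x) ∧
          Int.fract ((q0:ℝ)*x) + g - 1 ≠ Int.fract ((q:ℝ)*x)) → False := by
    intro q0 hq0 c hc hc2 hno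
    have hq0' := (hFmem q0).1 hq0
    have hmem : (((q0:ℝ)*x : ℝ) : AddCircle (1:ℝ)) ∈ orbitSet x Sig L :=
      ⟨q0, hq0'.1, hq0'.2, rfl⟩
    have hle := hgap _ hmem
    set p := Int.fract ((q0:ℝ)*x) with hp
    have hp01 := hfr01 q0
    rw [← hp] at hp01
    have hcoe : ∀ g : ℝ, (((q0:ℝ)*x : ℝ) : AddCircle (1:ℝ)) + (g : AddCircle (1:ℝ))
        = ((p + g : ℝ) : AddCircle (1:ℝ)) := by
      intro g; rw [← clb_coe_fract ((q0:ℝ)*x), ← AddCircle.coe_add]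
    -- the gap set is nonempty
    have hGne : Set.Nonempty {g : ℝ | 0 < g ∧
        (((q0:ℝ)*x : ℝ) : AddCircle (1:ℝ)) + (g : AddCircle (1:ℝ)) ∈ orbitSet x Sig L} := by
      obtain ⟨q1, hq1a, hq1b, hq1ne⟩ : ∃ q1, Sig+1 ≤ q1 ∧ q1 ≤ Sig+L ∧ q1 ≠ q0 := by
        by_cases h0 : q0 = Sig+1
        · exact ⟨Sig+2, by omega, by omega, by omega⟩
        · exact ⟨Sig+1, le_refl _, by omega, fun hh => h0 hh.symm⟩
      set r1 := Int.fract ((q1:ℝ)*x) with hr1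
      have hr01 := hfr01 q1
      rw [← hr1] at hr01
      have hrne : r1 ≠ p := by
        intro hh
        exact clb_coe_ne hx hq1ne (by
          rw [← clb_coe_fract ((q1:ℝ)*x), ← clb_coe_fract ((q0:ℝ)*x), ← hr1, ← hp, hh])
      have hmem1 : ∀ g : ℝ, p + g = r1 ∨ p + g = 1 + r1 →
          (((q0:ℝ)*x : ℝ) : AddCircle (1:ℝ)) + (g : AddCircle (1:ℝ)) ∈ orbitSet x Sig L := by
        intro g hg
        have : (((q0:ℝ)*x : ℝ) : AddCircle (1:ℝ)) + (g : AddCircle (1:ℝ))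
            = (((q1:ℝ)*x : ℝ) : AddCircle (1:ℝ)) := by
          rw [hcoe g]
          rcases hg with hg | hg
          · rw [hg, hr1, clb_coe_fract]
          · rw [hg, AddCircle.coe_add, AddCircle.coe_period, zero_add, hr1, clb_coe_fract]
        rw [this]
        exact ⟨q1, hq1a, hq1b, rfl⟩
      rcases lt_or_gt_of_ne hrne with hlt | hgt
      · refine ⟨1 + r1 - p, ?_, hmem1 _ (Or.inr (by ring))⟩
        have h1 := hp01.2
        have h2 := hr01.1
        linarith
      · refine ⟨r1 - p, ?_, hmem1 _ (Or.inl (by ring))⟩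
        linarith
    -- lower bound for the gap
    have hlb : c ≤ circGap (orbitSet x Sig L) (((q0:ℝ)*x : ℝ)) := by
      apply le_csInf hGne
      rintro g ⟨hg0, hgS⟩
      by_contra hgc
      push_neg at hgc
      rw [hcoe g] at hgS
      obtain ⟨q, hqa, hqb, hqe⟩ := hgS
      rw [← clb_coe_fract ((q:ℝ)*x)] at hqe
      set r := Int.fract ((q:ℝ)*x) with hr
      have hr01 := hfr01 q
      -- p + g - r is an integer n with -1 < n < 2
      have hsub : (((p + g - r : ℝ)) : AddCircle (1:ℝ)) = 0 := by
        rw [AddCircle.coe_sub, hqe, sub_self]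
      rw [AddCircle.coe_eq_zero_iff] at hsub
      obtain ⟨n, hn⟩ := hsub
      have hn0 : (n:ℝ) = p + g - r := by simpa using hn
      have hn1 : (-1:ℝ) < (n:ℝ) := by rw [hn0]; linarith [hp01.1, hr01.2]
      have hn2 : (n:ℝ) < 2 := by rw [hn0]; linarith [hr01.1]
      have hn1' : (-1:ℤ) < n := by exact_mod_cast hn1
      have hn2' : n < 2 := by exact_mod_cast hn2
      have hqF : q ∈ F := (hFmem q).2 ⟨hqa, hqb⟩
      have := hno g hg0 hgc q hqF
      interval_cases n
      · exact this.1 (by push_cast at hn0; linarith [hr, hn0])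
      · exact this.2 (by push_cast at hn0; linarith [hr, hn0])
    linarith
  -- Case split: is there a point below a?
  by_cases hbelow : ∃ q ∈ F, Int.fract ((q:ℝ)*x) < a
  · -- take the maximal such point
    obtain ⟨qw, hqw⟩ := hbelow
    set P : Finset ℕ := F.filter (fun q => Int.fract ((q:ℝ)*x) < a) with hP
    have hPne : P.Nonempty := ⟨qw, by rw [hP, Finset.mem_filter]; exact hqw⟩
    obtain ⟨q0, hq0P, hq0max⟩ := Finset.exists_max_image P (fun q => Int.fract ((q:ℝ)*x)) hPne
    rw [hP, Finset.mem_filter] at hq0P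
    set p := Int.fract ((q0:ℝ)*x) with hp
    have hpa : p < a := hq0P.2
    refine key q0 hq0P.1 (a + ℓ - p) (by linarith [hp]) (by linarith [hp, ha]) ?_
    intro g hg0 hgc q hqF
    have hq' := (hFmem q).1 hqF
    have hnotin := hcon q hq'.1 hq'.2
    simp only [Set.mem_Ico, not_and, not_lt] at hnotin
    constructor
    · intro he
      by_cases hqa : Int.fract ((q:ℝ)*x) < a
      · have hqP : q ∈ P := by rw [hP, Finset.mem_filter]; exact ⟨hqF, hqa⟩
        have := hq0max q hqP
        linarith [hp]
      · push_neg at hqa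
        have := hnotin hqa
        linarith [hp]
    · intro he
      have := (hfr01 q).1
      linarith [hp]
  · -- all points are ≥ a, hence ≥ a + ℓ by hcon
    push_neg at hbelow
    have hallhi : ∀ q ∈ F, a + ℓ ≤ Int.fract ((q:ℝ)*x) := by
      intro q hqF
      have hq' := (hFmem q).1 hqF
      have hnotin := hcon q hq'.1 hq'.2
      simp only [Set.mem_Ico, not_and, not_lt] at hnotin
      exact hnotin (hbelow q hqF)
    obtain ⟨q0, hq0F, hq0max⟩ := Finset.exists_max_image F (fun q => Int.fract ((q:ℝ)*x)) hFne
    set p := Int.fract ((q0:ℝ)*x) with hp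
    have hp1 : p < 1 := by have := (hfr01 q0).2; linarith [hp]
    refine key q0 hq0F (1 + a + ℓ - p) (by linarith [hp, ha]) (by linarith [hp]) ?_
    intro g hg0 hgc q hqF
    constructor
    · intro he
      have := hq0max q hqF
      linarith [hp]
    · intro he
      have := hallhi q hqF
      linarith [hp]

/-- Let `x` be irrational and `R ≥ 1`.  If the points
`{qx mod 1 : q ∈ (Σ, Σ+L]}` (with `L ≥ 2`) cut the circle into arcs all of length at most
`R/L`, then for any `δ ∈ (0,1]` the number of `q ∈ (Σ, Σ+L]` with `qx mod 1 ∈ [0, δ)`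
is at least `⌊δL/R⌋`. -/
theorem counting_lower_bound (x : ℝ) (hx : Irrational x) (R : ℝ) (hR : 1 ≤ R)
    (Sig L : ℕ) (hL : 2 ≤ L)
    (hgap : ∀ s ∈ orbitSet x Sig L, circGap (orbitSet x Sig L) s ≤ R / L) :
    ∀ δ : ℝ, 0 < δ → δ ≤ 1 →
      ⌊δ * (L : ℝ) / R⌋ ≤
        ({q : ℕ | Sig + 1 ≤ q ∧ q ≤ Sig + L ∧ Int.fract ((q : ℝ) * x) < δ}.ncard : ℤ) := by
  intro δ hδ0 hδ1
  set T : Set ℕ := {q : ℕ | Sig + 1 ≤ q ∧ q ≤ Sig + L ∧ Int.fract ((q : ℝ) * x) < δ} with hT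
  have hTfin : T.Finite := Set.Finite.subset (Set.finite_Icc (Sig+1) (Sig+L))
    (fun q hq => Set.mem_Icc.2 ⟨hq.1, hq.2.1⟩)
  rcases le_or_gt (⌊δ * (L : ℝ) / R⌋) 0 with hm | hm
  · exact le_trans hm (Int.ofNat_nonneg _)
  set ℓ : ℝ := R / L with hℓdef
  have hL0 : (0:ℝ) < L := by positivity
  have hℓ0 : 0 < ℓ := by rw [hℓdef]; positivity
  set M : ℕ := (⌊δ * (L : ℝ) / R⌋).toNat with hM
  have hMeq : (M : ℤ) = ⌊δ * (L : ℝ) / R⌋ := Int.toNat_of_nonneg (le_of_lt hm)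
  have hMle : (M : ℝ) * ℓ ≤ δ := by
    have h1 : ((M:ℤ):ℝ) ≤ δ * (L : ℝ) / R := by
      rw [hMeq]; exact Int.floor_le _
    have h2 : δ * (L : ℝ) / R = δ / ℓ := by
      rw [hℓdef, div_div_eq_mul_div]
    rw [h2] at h1
    have := (le_div_iff₀ hℓ0).1 (by exact_mod_cast h1)
    linarith
  have hhit : ∀ k : Fin M, ∃ q : ℕ, Sig + 1 ≤ q ∧ q ≤ Sig + L ∧
      Int.fract ((q:ℝ)*x) ∈ Set.Ico ((k:ℝ)*ℓ) ((k:ℝ)*ℓ + ℓ) := by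
    intro k
    have hk1 : (k:ℝ) + 1 ≤ M := by exact_mod_cast Nat.succ_le_of_lt k.2
    apply clb_interval_hit x hx Sig L hL ℓ hℓ0 hgap
    · positivity
    · nlinarith [hℓ0.le]
  choose f hf1 hf2 hf3 using hhit
  have hfinj : Function.Injective f := by
    intro k1 k2 he
    by_contra hne
    rcases lt_or_gt_of_ne (fun hh => hne (Fin.ext (by exact_mod_cast congrArg Fin.val hh))) with h | h
    all_goals {
      have e1 := hf3 k1
      have e2 := hf3 k2
      rw [he] at e1
      simp only [Set.mem_Ico] at e1 e2
      have : ((k1:ℕ):ℝ) + 1 ≤ ((k2:ℕ):ℝ) ∨ ((k2:ℕ):ℝ) + 1 ≤ ((k1:ℕ):ℝ) := by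
        rcases h with h
        first
        | exact Or.inl (by exact_mod_cast Nat.succ_le_of_lt h)
        | exact Or.inr (by exact_mod_cast Nat.succ_le_of_lt h)
      rcases this with h' | h' <;> nlinarith [e1.1, e1.2, e2.1, e2.2, hℓ0]
    }
  have hrange : Set.range f ⊆ T := by
    rintro q ⟨k, rfl⟩
    refine ⟨hf1 k, hf2 k, ?_⟩
    have := (hf3 k).2
    have hk1 : (k:ℝ) + 1 ≤ M := by exact_mod_cast Nat.succ_le_of_lt k.2
    nlinarith [hℓ0.le]
  have hcard : M ≤ T.ncard := by
    have h1 : (Set.range f).ncard = M := by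
      rw [← Set.image_univ, Set.ncard_image_of_injective _ hfinj, Set.ncard_univ]
      simp
    rw [← h1]
    exact Set.ncard_le_ncard hrange hTfin
  calc ⌊δ * (L : ℝ) / R⌋ = (M : ℤ) := hMeq.symm
    _ ≤ (T.ncard : ℤ) := by exact_mod_cast hcard
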